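/- Let # be a grade involution on Λ and let π₀ : Λ → ℂ denote the projection onto the degree-0 component (the 'complex part' or body). For triples u = (u₁, u₂, u₃) and v = (v₁, v₂, v₃) of elements of Λ with u₁, u₂, v₁, v₂ even and u₃, v₃ odd, and inner product ⟨u|v⟩ := (#u₁)*v₁ + (#u₂)*v₂ + (#u₃)*v₃, the body of the inner product equals the standard Hermitian inner product of the bodies: π₀(⟨u|v⟩) = conj(π₀ u₁) * (π₀ v₁) + conj(π₀ u₂) * (π₀ v₂). (Consistency: the supersymmetric inner product restricts to the ordinary quantum-mechanical one on the non-Grassmann parts.) -/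

import Mathlib

noncomputable section

abbrev Λ : Type := ExteriorAlgebra ℂ (Fin 2 → ℂ)

def η : Λ := ExteriorAlgebra.ι ℂ (Pi.single 0 1)

def η' : Λ := ExteriorAlgebra.ι ℂ (Pi.single 1 1)

/-- A grade involution `#` on `Λ`. -/
def IsGradeInvolution (f : Λ → Λ) : Prop :=
  (∀ x y : Λ, f (x + y) = f x + f y) ∧
  (∀ (c : ℂ) (x : Λ), f (c • x) = (starRingEnd ℂ c) • f x) ∧
  (∀ x y : Λ, f (x * y) = f x * f y) ∧
  (∀ (k : ℕ) (x : Λ), x ∈ ⋀[ℂ]^k (Fin 2 → ℂ) → f x ∈ ⋀[ℂ]^k (Fin 2 → ℂ)) ∧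
  (∀ (k : ℕ) (x : Λ), x ∈ ⋀[ℂ]^k (Fin 2 → ℂ) → f (f x) = ((-1 : ℂ) ^ k) • x)

/-- The submodule of even supernumbers. -/
def evenPart : Submodule ℂ Λ :=
  ⨆ k : ℕ, ⋀[ℂ]^(2 * k) (Fin 2 → ℂ)

/-- The submodule of odd supernumbers. -/
def oddPart : Submodule ℂ Λ :=
  ⨆ k : ℕ, ⋀[ℂ]^(2 * k + 1) (Fin 2 → ℂ)

/-- The projection onto the degree-0 component (the body, or complex part), realized
as the algebra morphism `Λ →ₐ[ℂ] ℂ` killing the generators. -/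
def π₀ : Λ →ₐ[ℂ] ℂ := ExteriorAlgebra.algebraMapInv

/-! Since `#` preserves every exterior power and `π₀` kills all positive ones, `π₀ ∘ #` is
determined on `⋀^0 = ℂ`, where multiplicativity and `## 1 = 1` force `#` to be complex
conjugation. Hence `π₀ (#x) = conj (π₀ x)` for every `x`, and the odd summand of the inner product
has body `conj (π₀ u₃) * π₀ v₃ = 0`. -/

namespace ExteriorAlgebra

variable {R M : Type*} [CommRing R] [AddCommGroup M] [Module R M]

theorem algebraMapInv_ι (m : M) : algebraMapInv (ι R m) = 0 := by
  simp [algebraMapInv]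

theorem algebraMapInv_eq_zero_of_mem_exteriorPower {k : ℕ} (hk : k ≠ 0)
    {x : ExteriorAlgebra R M} (hx : x ∈ ⋀[R]^k M) : algebraMapInv x = 0 := by
  have hι : (LinearMap.range (ι R : M →ₗ[R] _)).map
      (algebraMapInv (R := R) (M := M)).toLinearMap = ⊥ := by
    rw [← LinearMap.range_comp, LinearMap.range_eq_bot]
    ext m
    exact algebraMapInv_ι m
  have := Submodule.mem_map_of_mem (f := (algebraMapInv (R := R) (M := M)).toLinearMap) hx
  rwa [Submodule.map_pow, hι, Submodule.bot_pow hk, Submodule.mem_bot] at this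

end ExteriorAlgebra

theorem π₀_eq_zero_of_mem_exteriorPower {k : ℕ} (hk : k ≠ 0) {x : Λ}
    (hx : x ∈ ⋀[ℂ]^k (Fin 2 → ℂ)) : π₀ x = 0 :=
  ExteriorAlgebra.algebraMapInv_eq_zero_of_mem_exteriorPower hk hx

theorem π₀_eq_zero_of_mem_oddPart {x : Λ} (hx : x ∈ oddPart) : π₀ x = 0 := by
  refine Submodule.iSup_induction _ (motive := fun y ↦ π₀ y = 0) hx ?_ (map_zero π₀) ?_
  · exact fun k _ ↦ π₀_eq_zero_of_mem_exteriorPower (2 * k).succ_ne_zero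
  · intro a b ha hb
    rw [map_add, ha, hb, add_zero]

namespace IsGradeInvolution

variable {f : Λ → Λ}

theorem map_zero (hf : IsGradeInvolution f) : f 0 = 0 :=
  (AddMonoidHom.mk' f hf.1).map_zero

theorem map_one (hf : IsGradeInvolution f) : f 1 = 1 := by
  have hff : f (f 1) = 1 := by
    simpa using hf.2.2.2.2 0 1 (Submodule.one_le.mp le_rfl)
  calc f 1 = f 1 * f (f 1) := by rw [hff, mul_one]
    _ = f (1 * f 1) := (hf.2.2.1 _ _).symm
    _ = 1 := by rw [one_mul, hff]

theorem map_algebraMap (hf : IsGradeInvolution f) (c : ℂ) :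
    f (algebraMap ℂ Λ c) = algebraMap ℂ Λ (starRingEnd ℂ c) := by
  rw [Algebra.algebraMap_eq_smul_one, hf.2.1, hf.map_one, Algebra.algebraMap_eq_smul_one]

theorem π₀_map (hf : IsGradeInvolution f) (x : Λ) : π₀ (f x) = starRingEnd ℂ (π₀ x) := by
  induction x using DirectSum.Decomposition.inductionOn fun k ↦ ⋀[ℂ]^k (Fin 2 → ℂ) with
  | zero => rw [hf.map_zero, _root_.map_zero, _root_.map_zero]
  | add a b ha hb => rw [hf.1, map_add, map_add, map_add, ha, hb]
  | @homogeneous k x =>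
    obtain ⟨x, hx⟩ := x
    dsimp only
    rcases k with _ | k
    · obtain ⟨c, rfl⟩ := Submodule.mem_one.mp hx
      simp only [hf.map_algebraMap, AlgHom.commutes, Algebra.algebraMap_self, RingHom.id_apply]
    · rw [π₀_eq_zero_of_mem_exteriorPower k.succ_ne_zero hx,
        π₀_eq_zero_of_mem_exteriorPower k.succ_ne_zero (hf.2.2.2.1 _ x hx), _root_.map_zero]

end IsGradeInvolution

theorem inner_product_body_consistency_general (f : Λ → Λ) (hf : IsGradeInvolution f)
    (u v : Fin 3 → Λ) (hv2 : v 2 ∈ oddPart) :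
    π₀ (f (u 0) * v 0 + f (u 1) * v 1 + f (u 2) * v 2) =
      starRingEnd ℂ (π₀ (u 0)) * π₀ (v 0) + starRingEnd ℂ (π₀ (u 1)) * π₀ (v 1) := by
  rw [map_add, map_add, map_mul, map_mul, map_mul, hf.π₀_map, hf.π₀_map,
    π₀_eq_zero_of_mem_oddPart hv2, mul_zero, add_zero]

theorem inner_product_body_consistency (f : Λ → Λ) (hf : IsGradeInvolution f)
    (u v : Fin 3 → Λ)
    (hu0 : u 0 ∈ evenPart) (hu1 : u 1 ∈ evenPart) (hu2 : u 2 ∈ oddPart)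
    (hv0 : v 0 ∈ evenPart) (hv1 : v 1 ∈ evenPart) (hv2 : v 2 ∈ oddPart) :
    π₀ (f (u 0) * v 0 + f (u 1) * v 1 + f (u 2) * v 2) =
      starRingEnd ℂ (π₀ (u 0)) * π₀ (v 0) + starRingEnd ℂ (π₀ (u 1)) * π₀ (v 1) :=
  inner_product_body_consistency_general f hf u v hv2
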